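/- arXiv:2402.08753 — 3 statements merged into one kernel-verified Lean document; each statement's English description precedes it below -/
import Mathlib

section
/- Fix η > 0, a finite action set A, a utility function u: A × C → ℝ, and y ∈ C. Let q be the logistic (softmax) response distribution over A, i.e. q(a) ∝ exp(η·u(a,y)), and let a* be an action maximizing u(·, y). Then the expected utility under q satisfies E_{a∼q}[u(a, y)] ≥ u(a*, y) − (ln|A| + 1)/η. -/
open Finset

/-- The expected utility under the logistic (softmax) response is at most
(ln|A| + 1)/η below the best-response utility. -/
theorem logistic_response_utility
    {A : Type*} [Fintype A] [Nonempty A] {C : Type*}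
    (η : ℝ) (hη : 0 < η) (u : A → C → ℝ) (y : C)
    (q : A → ℝ)
    (hq : ∀ a, q a = Real.exp (η * u a y) / ∑ a', Real.exp (η * u a' y))
    (astar : A) (hstar : ∀ a', u astar y ≥ u a' y) :
    (∑ a, q a * u a y) ≥ u astar y - (Real.log (Fintype.card A) + 1) / η := by
  set Z : ℝ := ∑ a', Real.exp (η * u a' y) with hZdef
  have hZpos : 0 < Z := Finset.sum_pos (fun a _ => Real.exp_pos _) univ_nonempty
  have hqpos : ∀ a, 0 < q a := by
    intro a; rw [hq]; exact div_pos (Real.exp_pos _) hZpos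
  have hqsum : ∑ a, q a = 1 := by
    simp only [hq, ← Finset.sum_div]
    exact div_self hZpos.ne'
  have hlogq : ∀ a, Real.log (q a) = η * u a y - Real.log Z := by
    intro a
    rw [hq, Real.log_div (Real.exp_ne_zero _) hZpos.ne', Real.log_exp]
  set n : ℝ := (Fintype.card A : ℝ) with hn
  have hnpos : 0 < n := by
    have : 0 < Fintype.card A := Fintype.card_pos
    rw [hn]; exact_mod_cast this
  -- entropy bound
  have hent : ∑ a, q a * Real.log (q a) ≥ -Real.log n := by
    have key : ∀ a : A, q a * Real.log (q a) ≥ q a * (-Real.log n) + (q a - 1/n) := by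
      intro a
      have hqn : 0 < q a * n := mul_pos (hqpos a) hnpos
      have h1 : 0 < 1 / (q a * n) := div_pos one_pos hqn
      have h2 := Real.log_le_sub_one_of_pos h1
      have h3 : Real.log (1 / (q a * n)) = -(Real.log (q a) + Real.log n) := by
        rw [Real.log_div one_ne_zero hqn.ne',
          Real.log_mul (hqpos a).ne' hnpos.ne', Real.log_one]
        ring
      rw [h3] at h2
      have h4 : Real.log (q a) ≥ -Real.log n + 1 - 1 / (q a * n) := by linarith
      have h5 : q a * Real.log (q a) ≥ q a * (-Real.log n + 1 - 1 / (q a * n)) :=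
        mul_le_mul_of_nonneg_left h4 (hqpos a).le
      have h6 : q a * (1 / (q a * n)) = 1 / n := by
        rw [mul_one_div, div_eq_div_iff hqn.ne' hnpos.ne']; ring
      nlinarith [h5, h6]
    calc ∑ a, q a * Real.log (q a)
        ≥ ∑ a, (q a * (-Real.log n) + (q a - 1/n)) := Finset.sum_le_sum (fun a _ => key a)
      _ = -Real.log n := by
          rw [Finset.sum_add_distrib, ← Finset.sum_mul, Finset.sum_sub_distrib, hqsum]
          have hcard : ∑ _a : A, (1:ℝ)/n = 1 := by
            rw [Finset.sum_const, Finset.card_univ, nsmul_eq_mul, hn]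
            field_simp
          rw [hcard]; ring
  -- log Z ≥ η * u astar y
  have hlogZ : Real.log Z ≥ η * u astar y := by
    rw [ge_iff_le, Real.le_log_iff_exp_le hZpos]
    exact Finset.single_le_sum (f := fun a' => Real.exp (η * u a' y))
      (fun a _ => (Real.exp_pos _).le) (mem_univ astar)
  -- combine
  have hmain : η * ∑ a, q a * u a y ≥ η * u astar y - Real.log n := by
    have : η * ∑ a, q a * u a y = (∑ a, q a * Real.log (q a)) + Real.log Z := by
      rw [Finset.mul_sum]
      have : ∀ a : A, η * (q a * u a y) = q a * Real.log (q a) + q a * Real.log Z := by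
        intro a; rw [hlogq a]; ring
      rw [Finset.sum_congr rfl (fun a _ => this a), Finset.sum_add_distrib,
        ← Finset.sum_mul, hqsum, one_mul]
    linarith
  rw [ge_iff_le, sub_le_iff_le_add]
  have ht : (Real.log n + 1) / η * η = Real.log n + 1 := div_mul_cancel₀ _ hη.ne'
  nlinarith [hmain, ht, hη]
end

section
/- Let u: A × C → ℝ be affine in y over a convex set C ⊆ ℝ^d, let a ∈ A, and suppose a sequence of predictions and outcomes satisfies that whenever the agent best responds to ŷ_t with action a, we have u(a, ŷ_t) ≥ u(a', ŷ_t) for all a'. Let ȳ_a and ŷ̄_a be the averages of outcomes and predictions respectively over the rounds where action a is played, with n_a such rounds. Then for any fixed alternative action a', the total regret on those rounds satisfies Σ_{t: a_t=a}(u(a', y_t) − u(a, y_t)) = n_a·(u(a', ȳ_a) − u(a, ȳ_a)) ≤ n_a·(u(a', ŷ̄_a) − u(a, ŷ̄_a)) + 2L·n_a·‖ŷ̄_a − ȳ_a‖∞ ≤ 2L·n_a·‖ŷ̄_a − ȳ_a‖∞. -/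
/-!
Averaging commutes with affine utilities, so the regret summed over the rounds in which `a` is
played equals `n_a` times the regret at the average outcome `ȳ_a`. Moving from `ȳ_a` to the average
prediction `ŷ̄_a` costs at most `2L‖ŷ̄_a - ȳ_a‖` per round by Lipschitz continuity, and at `ŷ̄_a` the
regret is nonpositive, being (again by affineness) the average of the per-round regrets at `ŷ_t`,
each of which is nonpositive because `a` is a best response to `ŷ_t`.
-/

open Finset

section Averaging

variable {ι E : Type*} [AddCommGroup E] [Module ℝ E]

theorem AffineMap.card_mul_map_average (f : E →ᵃ[ℝ] ℝ) (S : Finset ι) (y : ι → E) :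
    (#S : ℝ) * f ((1 / (#S : ℝ)) • ∑ t ∈ S, y t) = ∑ t ∈ S, f (y t) := by
  rcases S.eq_empty_or_nonempty with rfl | hS
  · simp
  have hcard : (#S : ℝ) ≠ 0 := by exact_mod_cast hS.card_pos.ne'
  obtain ⟨ℓ, c, hf⟩ : ∃ (ℓ : E →ₗ[ℝ] ℝ) (c : ℝ), ∀ x, f x = ℓ x + c :=
    ⟨f.linear, f 0, fun x => congrFun f.decomp x⟩
  simp only [hf, map_smul, map_sum, sum_add_distrib, sum_const, nsmul_eq_mul, smul_eq_mul]
  field_simp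

theorem AffineMap.sum_sub_eq_card_mul_sub_average (f g : E →ᵃ[ℝ] ℝ) (S : Finset ι)
    (y : ι → E) :
    ∑ t ∈ S, (f (y t) - g (y t)) =
      (#S : ℝ) * (f ((1 / (#S : ℝ)) • ∑ t ∈ S, y t) - g ((1 / (#S : ℝ)) • ∑ t ∈ S, y t)) := by
  rw [sum_sub_distrib, mul_sub, f.card_mul_map_average, g.card_mul_map_average]

end Averaging

theorem exists_affineMap_eq_dotProduct_add {d : ℕ} (v : Fin d → ℝ) (c : ℝ) :
    ∃ f : (Fin d → ℝ) →ᵃ[ℝ] ℝ, ⇑f = fun y => ∑ i, v i * y i + c :=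
  ⟨(dotProductBilin ℝ ℝ v).toAffineMap + AffineMap.const ℝ _ c,
    funext fun y => by simp [dotProduct]⟩

theorem sub_le_sub_add_of_lipschitz {E : Type*} [SeminormedAddCommGroup E] {f g : E → ℝ}
    {L : ℝ} (hf : ∀ y z, |f y - f z| ≤ L * ‖y - z‖) (hg : ∀ y z, |g y - g z| ≤ L * ‖y - z‖)
    (y z : E) :
    f y - g y ≤ f z - g z + 2 * L * ‖z - y‖ := by
  have hfzy := (abs_le.mp (hf z y)).1
  have hgzy := (abs_le.mp (hg z y)).2
  linarith

theorem per_action_regret_bound_general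
    {d : ℕ} {A : Type*} [DecidableEq A]
    (T : ℕ) (L : ℝ)
    (yhat yout : Fin T → (Fin d → ℝ))
    (u : A → (Fin d → ℝ) → ℝ)
    (haff : ∀ a, ∃ (v : Fin d → ℝ) (c : ℝ), ∀ y, u a y = (∑ i, v i * y i) + c)
    (hLip : ∀ a y z, |u a y - u a z| ≤ L * ‖y - z‖)
    (act : Fin T → A)
    (hbr : ∀ t a', u (act t) (yhat t) ≥ u a' (yhat t))
    (a : A)
    (S : Finset (Fin T)) (hS : S = Finset.univ.filter (fun t => act t = a))
    (na : ℕ) (hna : na = S.card)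
    (ybar yhatbar : Fin d → ℝ)
    (hybar : ybar = (1 / (na : ℝ)) • ∑ t ∈ S, yout t)
    (hyhatbar : yhatbar = (1 / (na : ℝ)) • ∑ t ∈ S, yhat t)
    (a' : A) :
    (∑ t ∈ S, (u a' (yout t) - u a (yout t))
        = (na : ℝ) * (u a' ybar - u a ybar)) ∧
    (na : ℝ) * (u a' ybar - u a ybar)
        ≤ (na : ℝ) * (u a' yhatbar - u a yhatbar)
          + 2 * L * (na : ℝ) * ‖yhatbar - ybar‖ ∧
    (na : ℝ) * (u a' yhatbar - u a yhatbar) + 2 * L * (na : ℝ) * ‖yhatbar - ybar‖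
        ≤ 2 * L * (na : ℝ) * ‖yhatbar - ybar‖ := by
  have haffine : ∀ b, ∃ f : (Fin d → ℝ) →ᵃ[ℝ] ℝ, ⇑f = u b := fun b => by
    obtain ⟨v, c, hvc⟩ := haff b
    obtain ⟨f, hf⟩ := exists_affineMap_eq_dotProduct_add v c
    exact ⟨f, hf.trans (funext hvc).symm⟩
  obtain ⟨f', hf'⟩ := haffine a'
  obtain ⟨f, hf⟩ := haffine a
  have hregret (y : Fin T → Fin d → ℝ) := f'.sum_sub_eq_card_mul_sub_average f S y
  rw [hf', hf, ← hna] at hregret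
  have hbr_S : ∑ t ∈ S, (u a' (yhat t) - u a (yhat t)) ≤ 0 :=
    sum_nonpos fun t ht => by
      rw [hS, mem_filter] at ht
      exact sub_nonpos.mpr (ht.2 ▸ hbr t a')
  have hlip := sub_le_sub_add_of_lipschitz (hLip a') (hLip a) ybar yhatbar
  refine ⟨hybar ▸ hregret yout, ?_, ?_⟩
  · linarith [mul_le_mul_of_nonneg_left hlip (Nat.cast_nonneg na : (0 : ℝ) ≤ na)]
  · linarith [hyhatbar ▸ hregret yhat]

/-- Per-action regret bound: on the rounds where a best-responding agent plays action a,
the regret to any fixed alternative a' is controlled by the conditional bias. -/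
theorem per_action_regret_bound
    {d : ℕ} {A : Type*} [DecidableEq A]
    (T : ℕ) (L : ℝ) (hL : 0 ≤ L)
    (C : Set (Fin d → ℝ)) (hC : Convex ℝ C)
    (yhat yout : Fin T → (Fin d → ℝ))
    (hin : ∀ t, yhat t ∈ C ∧ yout t ∈ C)
    (u : A → (Fin d → ℝ) → ℝ)
    (haff : ∀ a, ∃ (v : Fin d → ℝ) (c : ℝ), ∀ y, u a y = (∑ i, v i * y i) + c)
    (hLip : ∀ a y z, |u a y - u a z| ≤ L * ‖y - z‖)
    (act : Fin T → A)
    (hbr : ∀ t a', u (act t) (yhat t) ≥ u a' (yhat t))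
    (a : A)
    (S : Finset (Fin T)) (hS : S = Finset.univ.filter (fun t => act t = a))
    (hSne : S.Nonempty)
    (na : ℕ) (hna : na = S.card)
    (ybar yhatbar : Fin d → ℝ)
    (hybar : ybar = (1 / (na : ℝ)) • ∑ t ∈ S, yout t)
    (hyhatbar : yhatbar = (1 / (na : ℝ)) • ∑ t ∈ S, yhat t)
    (a' : A) :
    (∑ t ∈ S, (u a' (yout t) - u a (yout t))
        = (na : ℝ) * (u a' ybar - u a ybar)) ∧
    (na : ℝ) * (u a' ybar - u a ybar)
        ≤ (na : ℝ) * (u a' yhatbar - u a yhatbar)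
          + 2 * L * (na : ℝ) * ‖yhatbar - ybar‖ ∧
    (na : ℝ) * (u a' yhatbar - u a yhatbar) + 2 * L * (na : ℝ) * ‖yhatbar - ybar‖
        ≤ 2 * L * (na : ℝ) * ‖yhatbar - ybar‖ :=
  per_action_regret_bound_general T L yhat yout u haff hLip act hbr a S hS na hna ybar yhatbar hybar
    hyhatbar a'
end

section
/- Let C = [0,1], let A be a finite action set, and let u: A × C → ℝ be affine in y. Suppose predictions ŷ₁,...,ŷ_T take values in a finite grid C_ε, outcomes y₁,...,y_T ∈ [0,1], and for every pair y₁ ≤ y₂ in C_ε the interval-conditioned bias satisfies |(1/T)·Σ_{t: ŷ_t ∈ [y₁,y₂]}(ŷ_t − y_t)| ≤ α. If the agent best responds at each round (a_t ∈ argmax_a u(a, ŷ_t), with consistent tie-breaking), then for every action a ∈ A, the bias conditioned on playing a satisfies |(1/T)·Σ_{t: a_t = a}(ŷ_t − y_t)| ≤ α. -/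
/-! For an affine utility, the advantage of an action `a` over another is affine in the belief,
so if `a` is optimal at both ends of an interval and some `a'` is optimal inside it, the
advantage is nonnegative at the ends and nonpositive inside, hence zero inside and at one end
(depending on the sign of the slope). With ties broken towards the largest action this forces
`a' = a`, so each action is played on an interval of beliefs. On the grid, the rounds where `a`
is played are then exactly those whose prediction lies between the smallest and the largest
grid prediction at which `a` is played, and the interval-bias bound applies. -/

open Finset

lemma affine_eq_zero_of_nonneg_of_nonpos {v c y₁ y y₂ : ℝ} (h₁ : y₁ ≤ y) (h₂ : y ≤ y₂)
    (hy₁ : 0 ≤ v * y₁ + c) (hy₂ : 0 ≤ v * y₂ + c) (hy : v * y + c ≤ 0) :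
    v * y + c = 0 ∧ (v * y₁ + c = 0 ∨ v * y₂ + c = 0) := by
  rcases le_total 0 v with hv | hv
  · have := mul_le_mul_of_nonneg_left h₁ hv
    exact ⟨by linarith, Or.inl (by linarith)⟩
  · have := mul_le_mul_of_nonpos_left h₂ hv
    exact ⟨by linarith, Or.inr (by linarith)⟩

def IsGreatestBestResponse {A : Type*} [LinearOrder A] (u : A → ℝ → ℝ) (BR : ℝ → A) : Prop :=
  ∀ y, (∀ b, u (BR y) y ≥ u b y) ∧ ∀ a', (∀ b, u a' y ≥ u b y) → a' ≤ BR y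

namespace IsGreatestBestResponse

variable {A : Type*} [LinearOrder A] {u : A → ℝ → ℝ} {BR : ℝ → A}

lemma le_of_utility_eq (hBR : IsGreatestBestResponse u BR) {b : A} {y : ℝ}
    (h : u b y = u (BR y) y) : b ≤ BR y :=
  (hBR y).2 b fun b' => h ▸ (hBR y).1 b'

lemma ordConnected_preimage (hBR : IsGreatestBestResponse u BR)
    (haff : ∀ a, ∃ v c : ℝ, ∀ y, u a y = v * y + c) (a : A) :
    (BR ⁻¹' {a}).OrdConnected := by
  refine ⟨fun y₁ (h₁ : BR y₁ = a) y₂ (h₂ : BR y₂ = a) y hy => ?_⟩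
  show BR y = a
  obtain ⟨v, c, hu⟩ := haff a
  obtain ⟨v', c', hu'⟩ := haff (BR y)
  have gap (z : ℝ) : u a z - u (BR y) z = (v - v') * z + (c - c') := by
    rw [hu, hu']; ring
  have opt₁ := (hBR y₁).1 (BR y)
  have opt₂ := (hBR y₂).1 (BR y)
  have opt := (hBR y).1 a
  rw [h₁] at opt₁
  rw [h₂] at opt₂
  obtain ⟨hy0, hend⟩ := affine_eq_zero_of_nonneg_of_nonpos (v := v - v') (c := c - c')
    hy.1 hy.2 (by linarith [gap y₁]) (by linarith [gap y₂]) (by linarith [gap y])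
  have hle : a ≤ BR y := hBR.le_of_utility_eq (by linarith [gap y])
  have hge : BR y ≤ a := by
    rcases hend with hend | hend
    · exact h₁ ▸ hBR.le_of_utility_eq (by rw [h₁]; linarith [gap y₁])
    · exact h₂ ▸ hBR.le_of_utility_eq (by rw [h₂]; linarith [gap y₂])
  exact le_antisymm hge hle

end IsGreatestBestResponse

lemma exists_filter_eq_filter_Icc {ι α β : Type*} [Fintype ι] [LinearOrder α] [DecidableEq β]
    (f : ι → α) (g : α → β) {b : β} (hg : (g ⁻¹' {b}).OrdConnected) (hb : ∃ t, g (f t) = b) :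
    ∃ t₁ t₂, f t₁ ≤ f t₂ ∧ univ.filter (fun t => g (f t) = b) =
      univ.filter (fun t => f t₁ ≤ f t ∧ f t ≤ f t₂) := by
  set F := univ.filter (fun t => g (f t) = b)
  have hF : F.Nonempty := let ⟨t, ht⟩ := hb; ⟨t, by simpa [F] using ht⟩
  obtain ⟨t₁, ht₁, hmin⟩ := F.exists_min_image f hF
  obtain ⟨t₂, ht₂, hmax⟩ := F.exists_max_image f hF
  refine ⟨t₁, t₂, hmin t₂ ht₂, ?_⟩
  have hmem (t : ι) : t ∈ F ↔ g (f t) = b := by simp [F]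
  ext t
  rw [hmem, mem_filter, and_iff_right (mem_univ t)]
  exact ⟨fun ht => ⟨hmin t ((hmem t).2 ht), hmax t ((hmem t).2 ht)⟩,
    fun ht => hg.out ((hmem t₁).1 ht₁) ((hmem t₂).1 ht₂) ht⟩

theorem interval_bias_implies_best_response_bias_general
    {A : Type*} [LinearOrder A]
    (T : ℕ) (hT : 0 < T)
    (Cε : Finset ℝ)
    (yhat yout : Fin T → ℝ)
    (hyhat : ∀ t, yhat t ∈ Cε)
    (u : A → ℝ → ℝ)
    (haff : ∀ a, ∃ v c : ℝ, ∀ y, u a y = v * y + c)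
    (BR : ℝ → A)
    (hBR : ∀ y, (∀ b, u (BR y) y ≥ u b y) ∧
      ∀ a', (∀ b, u a' y ≥ u b y) → a' ≤ BR y)
    (act : Fin T → A) (hact : ∀ t, act t = BR (yhat t))
    (α : ℝ)
    (hbias : ∀ y₁ ∈ Cε, ∀ y₂ ∈ Cε, y₁ ≤ y₂ →
      |(1 / (T : ℝ)) * ∑ t ∈ Finset.univ.filter
          (fun t => y₁ ≤ yhat t ∧ yhat t ≤ y₂), (yhat t - yout t)| ≤ α) :
    ∀ a : A,
      |(1 / (T : ℝ)) * ∑ t ∈ Finset.univ.filter (fun t => act t = a),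
        (yhat t - yout t)| ≤ α := by
  obtain rfl : act = fun t => BR (yhat t) := funext hact
  intro a
  by_cases hplayed : ∃ t, BR (yhat t) = a
  · obtain ⟨t₁, t₂, hle, hfilter⟩ := exists_filter_eq_filter_Icc yhat BR
      ((show IsGreatestBestResponse u BR from hBR).ordConnected_preimage haff a) hplayed
    rw [hfilter]
    exact hbias _ (hyhat t₁) _ (hyhat t₂) hle
  · have hempty : univ.filter (fun t => BR (yhat t) = a) = ∅ :=
      filter_eq_empty_iff.2 fun t _ ht => hplayed ⟨t, ht⟩
    rw [hempty, sum_empty, mul_zero, abs_zero]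
    exact (abs_nonneg _).trans (hbias _ (hyhat ⟨0, hT⟩) _ (hyhat ⟨0, hT⟩) le_rfl)

/-- If predictions on a one-dimensional grid are unbiased conditional on every grid
interval, then they are unbiased conditional on every best-response event of any
affine utility. -/
theorem interval_bias_implies_best_response_bias
    {A : Type*} [Fintype A] [LinearOrder A]
    (T : ℕ) (hT : 0 < T)
    (Cε : Finset ℝ) (hCε : ↑Cε ⊆ Set.Icc (0:ℝ) 1)
    (yhat yout : Fin T → ℝ)
    (hyhat : ∀ t, yhat t ∈ Cε)
    (hyout : ∀ t, yout t ∈ Set.Icc (0:ℝ) 1)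
    (u : A → ℝ → ℝ)
    (haff : ∀ a, ∃ v c : ℝ, ∀ y, u a y = v * y + c)
    (BR : ℝ → A)
    (hBR : ∀ y, (∀ b, u (BR y) y ≥ u b y) ∧
      ∀ a', (∀ b, u a' y ≥ u b y) → a' ≤ BR y)
    (act : Fin T → A) (hact : ∀ t, act t = BR (yhat t))
    (α : ℝ)
    (hbias : ∀ y₁ ∈ Cε, ∀ y₂ ∈ Cε, y₁ ≤ y₂ →
      |(1 / (T : ℝ)) * ∑ t ∈ Finset.univ.filter
          (fun t => y₁ ≤ yhat t ∧ yhat t ≤ y₂), (yhat t - yout t)| ≤ α) :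
    ∀ a : A,
      |(1 / (T : ℝ)) * ∑ t ∈ Finset.univ.filter (fun t => act t = a),
        (yhat t - yout t)| ≤ α :=
  interval_bias_implies_best_response_bias_general T hT Cε yhat yout hyhat u haff BR hBR act hact α
    hbias
end
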